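/- arXiv:2209.04856 — 4 statements merged into one kernel-verified Lean document; each statement's English description precedes it below -/
import Mathlib

section
/- For any d_out × d_in matrix A and any d_in × m matrix B with m ≤ d_in and d_out ≤ d_in, the matrix product AB equals the sum over o = 1,...,d_in of the entrywise (Hadamard) products Ã^(o) · B̃^(o), where Ã^(o)[j,k] = A[j, (j+k+o-2 mod d_in)+1] and B̃^(o)[j,k] = B[(j+k+o-2 mod d_in)+1, k] for j ∈ [d_out], k ∈ [m] (indices of rows/columns taken cyclically modulo the matrix dimensions). -/
open Matrix BigOperators

/-- Matrix Reducing correctness: for a `d_out × d_in` matrix `A` and a `d_in × m`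
matrix `B` with `m ≤ d_in` and `d_out ≤ d_in`, the product `AB` equals the sum over
`o` of the entrywise products of the cyclically transformed/reduced matrices. -/
theorem matrix_reducing_correctness (dout din m : ℕ)
    (hm : m ≤ din) (hd : dout ≤ din)
    (A : Matrix (Fin dout) (Fin din) ℝ) (B : Matrix (Fin din) (Fin m) ℝ) :
    ∀ (j : Fin dout) (k : Fin m),
      (A * B) j k =
        ∑ o : Fin din,
          A j ⟨(j.val + k.val + o.val) % din, Nat.mod_lt _ o.pos⟩ *
          B ⟨(j.val + k.val + o.val) % din, Nat.mod_lt _ o.pos⟩ k := by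
  intro j k
  have hdin : 0 < din := lt_of_lt_of_le j.pos hd
  haveI : NeZero din := ⟨hdin.ne'⟩
  rw [Matrix.mul_apply]
  refine (Fintype.sum_equiv
    (Equiv.addLeft (⟨(j.val + k.val) % din, Nat.mod_lt _ hdin⟩ : Fin din))
    _ (fun i => A j i * B i k) ?_).symm
  intro o
  congr 1 <;> · congr 1; ext
    <;> simp [Fin.add_def, Nat.mod_add_mod]
end

section
/- Let δ(A,B) denote the Matrix Reducing evaluation: for a d_out × d matrix A and a d_in × m matrix B with d_in dividing d and d ≥ m, δ(A,B) = Σ_{o=1}^{d_in} Ã^(o) ⊙ B̃^(o), where Ã^(o) and B̃^(o) are the d_out × m top-left submatrices of ξ^(o-1)(σ(A)) and ψ^(o-1)(τ(B)) respectively. Then for any d_out × d_in matrix A, any d_in × d_in matrix B1, and any d_in × m' matrix B2 with m' ≤ d_in, the horizontal concatenation of δ(A, B1) and δ(A, B2) equals δ of the horizontal concatenation (A | A) with the horizontal concatenation (B1 | B2). -/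
open Matrix BigOperators

/-- The Matrix Reducing evaluation `δ(A, B)`: `A` is a `dout × d` matrix, `B` is a
`din × m` matrix; entry `(j,k)` is `∑ o, A[j, (j+k+o) mod d] * B[(j+k+o) mod din, k]`
(0-based cyclic indexing), i.e. the sum of entrywise products of the `dout × m`
top-left submatrices of `ξ^(o-1)(σ(A))` and `ψ^(o-1)(τ(B))`. -/
noncomputable def deltaMR {dout d din m : ℕ} (hd : 0 < d) (hdin : 0 < din)
    (A : Matrix (Fin dout) (Fin d) ℝ) (B : Matrix (Fin din) (Fin m) ℝ) :
    Matrix (Fin dout) (Fin m) ℝ :=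
  fun j k => ∑ o : Fin din,
    A j ⟨(j.val + k.val + o.val) % d, Nat.mod_lt _ hd⟩ *
    B ⟨(j.val + k.val + o.val) % din, Nat.mod_lt _ hdin⟩ k

/-- Horizontal concatenation of matrices with equal row counts. -/
def hcat {r n1 n2 : ℕ} (M1 : Matrix (Fin r) (Fin n1) ℝ) (M2 : Matrix (Fin r) (Fin n2) ℝ) :
    Matrix (Fin r) (Fin (n1 + n2)) ℝ :=
  fun j k => if h : k.val < n1 then M1 j ⟨k.val, h⟩ else M2 j ⟨k.val - n1, by omega⟩

section hcat

variable {r n1 n2 : ℕ} (M1 : Matrix (Fin r) (Fin n1) ℝ) (M2 : Matrix (Fin r) (Fin n2) ℝ)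

theorem hcat_apply_of_lt (j : Fin r) {k : Fin (n1 + n2)} (hk : k.val < n1) :
    hcat M1 M2 j k = M1 j ⟨k.val, hk⟩ :=
  dif_pos hk

theorem hcat_apply_of_le (j : Fin r) {k : Fin (n1 + n2)} (hk : n1 ≤ k.val) :
    hcat M1 M2 j k = M2 j ⟨k.val - n1, by omega⟩ :=
  dif_neg (Nat.not_lt.mpr hk)

theorem hcat_self_apply (j : Fin r) (k : Fin (n1 + n1)) :
    hcat M1 M1 j k = M1 j ⟨k.val % n1, Nat.mod_lt _ (by have := k.isLt; omega)⟩ := by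
  by_cases hk : k.val < n1
  · rw [hcat_apply_of_lt M1 M1 j hk]
    exact congrArg (M1 j) (Fin.ext (Nat.mod_eq_of_lt hk).symm)
  · rw [hcat_apply_of_le M1 M1 j (Nat.not_lt.mp hk)]
    exact congrArg (M1 j) (Fin.ext (by
      simp only [Nat.mod_eq_sub_mod (Nat.not_lt.mp hk), Nat.mod_eq_of_lt (by omega : k.val - n1 < n1)]))

end hcat

section deltaMR

variable {dout d din : ℕ}

theorem deltaMR_hcat_self {m : ℕ} (hd : 0 < d) (hdd : 0 < d + d) (hdin : 0 < din)
    (A : Matrix (Fin dout) (Fin d) ℝ) (B : Matrix (Fin din) (Fin m) ℝ) :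
    deltaMR hdd hdin (hcat A A) B = deltaMR hd hdin A B := by
  ext j k
  refine Finset.sum_congr rfl fun o _ => ?_
  rw [hcat_self_apply]
  congr 3
  exact Nat.mod_mod_of_dvd _ (Dvd.intro_left 2 (two_mul d))

/-- Shifting the column index by a common multiple of `d` and `din` leaves every summand
of `δ` unchanged, so `δ` commutes with splitting `B` into column blocks of such widths. -/
theorem hcat_deltaMR {n1 n2 : ℕ} (hd : 0 < d) (hdin : 0 < din) (hd1 : d ∣ n1) (hdin1 : din ∣ n1)
    (A : Matrix (Fin dout) (Fin d) ℝ)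
    (B1 : Matrix (Fin din) (Fin n1) ℝ) (B2 : Matrix (Fin din) (Fin n2) ℝ) :
    hcat (deltaMR hd hdin A B1) (deltaMR hd hdin A B2) = deltaMR hd hdin A (hcat B1 B2) := by
  ext j k
  by_cases hk : k.val < n1
  · rw [hcat_apply_of_lt _ _ j hk]
    refine Finset.sum_congr rfl fun o _ => ?_
    rw [hcat_apply_of_lt _ _ _ hk]
  · have hk : n1 ≤ k.val := Nat.not_lt.mp hk
    rw [hcat_apply_of_le _ _ j hk]
    refine Finset.sum_congr rfl fun o _ => ?_
    rw [hcat_apply_of_le _ _ _ hk]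
    have hshift : j.val + k.val + o.val = j.val + (k.val - n1) + o.val + n1 := by omega
    have add_mod_of_dvd {a q : ℕ} (hq : q ∣ n1) : (a + n1) % q = a % q := by
      obtain ⟨c, hc⟩ := hq
      rw [hc, Nat.add_mul_mod_self_left]
    simp only [hshift, add_mod_of_dvd hd1, add_mod_of_dvd hdin1]

end deltaMR

/-- Composition lemma for Matrix Reducing: `(δ(A,B1) | δ(A,B2)) = δ((A|A),(B1|B2))`. -/
theorem matrix_reducing_composition (dout din m' : ℕ) (hdin : 0 < din)
    (A : Matrix (Fin dout) (Fin din) ℝ)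
    (B1 : Matrix (Fin din) (Fin din) ℝ) (B2 : Matrix (Fin din) (Fin m') ℝ) :
    hcat (deltaMR hdin hdin A B1) (deltaMR hdin hdin A B2) =
      deltaMR (by omega) hdin (hcat A A) (hcat B1 B2) := by
  rw [deltaMR_hcat_self hdin, hcat_deltaMR hdin hdin dvd_rfl dvd_rfl]
end

section
/- SOTA homomorphic matrix multiplication correctness: let A be a d_out × d_in matrix with d_out dividing d_in, and B a d_in × m matrix with m ≤ d_in. Form the square matrix Ā of order d_in by vertically stacking d_in/d_out copies of A, and B̄ of order d_in by padding B with d_in − m zero columns. Define Ā^(o) = ξ^(o−1)(σ(Ā)) and B̄^(o) = ψ^(o−1)(τ(B̄)) for o = 1,...,d_out, and H = Σ_{o=1}^{d_out} Ā^(o) ⊙ B̄^(o). Split H vertically into d_in/d_out blocks of d_out rows and let H̃ be their sum. Then AB = H̃[1:d_out, 1:m] (the first m columns of H̃). -/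
/-!
Entry `(j, k)` of the `b`-th block of `H` is `∑ₒ A[j, i] B[i, k]` with
`i = b·d_out + j + k + o mod d_in`: the row of the replicated `Ā` is `j` in every block, and as
`b` and `o` range over their blocks the column index `i` runs through every residue mod `d_in`
exactly once. Summing the blocks therefore gives `∑ᵢ A[j, i] B[i, k] = (AB)[j, k]`.
-/

open Matrix BigOperators

lemma sota_block_lt {dout din : ℕ} (hdvd : dout ∣ din) (b : Fin (din / dout)) (j : Fin dout) :
    b.val * dout + j.val < din := by
  have h1 : b.val * dout + j.val < (b.val + 1) * dout := by
    rw [Nat.add_mul, one_mul]; exact Nat.add_lt_add_left j.isLt _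
  have h2 : (b.val + 1) * dout ≤ (din / dout) * dout := Nat.mul_le_mul_right _ b.isLt
  have h3 : (din / dout) * dout = din := Nat.div_mul_cancel hdvd
  omega

theorem Fin.sum_sum_mul_add_add_mod {M : Type*} [AddCommMonoid M] {d n : ℕ} (hdvd : d ∣ n)
    (hn : 0 < n) (c : ℕ) (f : Fin n → M) :
    ∑ b : Fin (n / d), ∑ o : Fin d, f ⟨(b * d + c + o) % n, Nat.mod_lt _ hn⟩ = ∑ i, f i := by
  have : NeZero n := ⟨hn.ne'⟩
  let e : Fin (n / d) × Fin d ≃ Fin n :=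
    (finProdFinEquiv.trans (finCongr (Nat.div_mul_cancel hdvd))).trans
      (Equiv.addRight (Fin.ofNat n c))
  rw [← e.sum_comp, Fintype.sum_prod_type]
  refine Finset.sum_congr rfl fun b _ => Finset.sum_congr rfl fun o _ => congrArg f (Fin.ext ?_)
  simp only [e, Equiv.trans_apply, finCongr_apply, Equiv.coe_addRight, val_add,
    val_cast, finProdFinEquiv_apply_val, ofNat_eq_cast, val_natCast, Nat.add_mod_mod]
  congr 1
  ring

/-- Correctness of the SOTA homomorphic matrix multiplication method: with `d_out`
dividing `d_in` and `m ≤ d_in`, let `Ā` stack `d_in/d_out` copies of `A` into a square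
matrix of order `d_in`, let `B̄` pad `B` with zero columns, let
`H = Σ_{o} ξ^(o-1)(σ(Ā)) ⊙ ψ^(o-1)(τ(B̄))`, and let `H̃` be the sum of the
`d_in/d_out` vertical blocks of `H` of `d_out` rows each.  Then `AB` is the matrix of
the first `m` columns of `H̃`. -/
theorem sota_matmul_correctness (dout din m : ℕ) (hpos : 0 < dout)
    (hdvd : dout ∣ din) (hm : m ≤ din)
    (A : Matrix (Fin dout) (Fin din) ℝ) (B : Matrix (Fin din) (Fin m) ℝ)
    (Abar Bbar H : Matrix (Fin din) (Fin din) ℝ)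
    (hAbar : ∀ j k, Abar j k = A ⟨j.val % dout, Nat.mod_lt _ hpos⟩ k)
    (hBbar : ∀ j k, Bbar j k = if h : k.val < m then B j ⟨k.val, h⟩ else 0)
    (hH : ∀ j k, H j k =
      ∑ o : Fin dout,
        Abar j ⟨(j.val + k.val + o.val) % din, Nat.mod_lt _ j.pos⟩ *
        Bbar ⟨(j.val + k.val + o.val) % din, Nat.mod_lt _ j.pos⟩ k) :
    ∀ (j : Fin dout) (k : Fin m),
      (A * B) j k =
        ∑ b : Fin (din / dout),
          H ⟨b.val * dout + j.val, sota_block_lt hdvd b j⟩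
            ⟨k.val, lt_of_lt_of_le k.isLt hm⟩ := by
  intro j k
  have hdin : 0 < din := k.pos.trans_le hm
  simp only [hH, hAbar, hBbar, Nat.mul_add_mod_of_lt j.isLt, dif_pos k.isLt]
  rw [Matrix.mul_apply, ← Fin.sum_sum_mul_add_add_mod hdvd hdin (j + k)]
  simp only [add_assoc, Fin.eta]
end

section
/- For any d_out × d_in matrix A and any d_in × m matrix B with d_in | m, writing B as horizontal blocks B = (B_1 | ... | B_{m/d_in}) each of size d_in × d_in, and Ā = (A | ... | A) with m/d_in horizontal copies of A, then δ(Ā, B) = AB, where δ is the Matrix Reducing evaluation δ(Ā,B) = Σ_{o=1}^{d_in} Ã^(o) ⊙ B̃^(o) with Ã^(o), B̃^(o) the d_out × m top-left submatrices of ξ^(o−1)(σ(Ā)) and ψ^(o−1)(τ(B)). -/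
open Matrix BigOperators

/-- Matrix Reducing with batched copies: for a `d_out × d_in` matrix `A` (with
`d_out ≤ d_in`) and a `d_in × m` matrix `B` where `d_in ∣ m`, writing `Ā` for the
horizontal packing of `m/d_in` copies of `A` (a `d_out × m` matrix, so
`Ā[j,k] = A[j, k mod d_in]`), the Matrix Reducing evaluation
`δ(Ā, B)[j,k] = Σ_{o=1}^{d_in} Ã^(o)[j,k] · B̃^(o)[j,k]`, with
`Ã^(o)[j,k] = Ā[j, (j+k+o-1) mod m]` and `B̃^(o)[j,k] = B[(j+k+o-1) mod d_in, k]`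
(cyclic indexing), equals the matrix product `AB`. -/
theorem matrix_reducing_batched (dout din m : ℕ) (hdin : 0 < din)
    (hd : dout ≤ din) (hdvd : din ∣ m)
    (A : Matrix (Fin dout) (Fin din) ℝ) (B : Matrix (Fin din) (Fin m) ℝ)
    (Abar : Matrix (Fin dout) (Fin m) ℝ)
    (hAbar : ∀ j k, Abar j k = A j ⟨k.val % din, Nat.mod_lt _ hdin⟩) :
    ∀ (j : Fin dout) (k : Fin m),
      (∑ o : Fin din,
          Abar j ⟨(j.val + k.val + o.val) % m, Nat.mod_lt _ k.pos⟩ *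
          B ⟨(j.val + k.val + o.val) % din, Nat.mod_lt _ hdin⟩ k) =
        (A * B) j k := by
  intro j k
  haveI : NeZero din := ⟨hdin.ne'⟩
  rw [Matrix.mul_apply]
  have hcd : ∀ o : Fin din,
      ((⟨(j.val + k.val) % din, Nat.mod_lt _ hdin⟩ : Fin din) + o) =
        (⟨(j.val + k.val + o.val) % din, Nat.mod_lt _ hdin⟩ : Fin din) := by
    intro o
    apply Fin.ext
    simp [Fin.add_def, Nat.mod_add_mod]
  refine Fintype.sum_equiv (Equiv.addLeft (⟨(j.val + k.val) % din, Nat.mod_lt _ hdin⟩ : Fin din)) _ _ ?_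
  intro o
  rw [hAbar]
  simp only [Equiv.coe_addLeft, hcd o]
  congr 2
  exact Fin.ext (by simp [Nat.mod_mod_of_dvd _ hdvd])
end
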